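/- arXiv:2509.04795 — 2 statements merged into one kernel-verified Lean document; each statement's English description precedes it below -/
import Mathlib

section
/- The order-2 automorphism ω of psl(2|2) negates the supertrace form: ⟨ω(A), ω(B)⟩ = -⟨A,B⟩ for all A, B in psl(2|2). -/
open Matrix

noncomputable section

abbrev M4 := Matrix (Fin 4) (Fin 4) ℂ

def Eij (i j : Fin 4) : M4 := Matrix.single i j 1

/-- Even basis elements of psl(2|2) (as matrix representatives). -/
def E1 : M4 := Eij 0 1
def H1 : M4 := Eij 0 0 - Eij 1 1
def F1 : M4 := Eij 1 0
def E2 : M4 := Eij 2 3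
def H2 : M4 := Eij 2 2 - Eij 3 3
def F2 : M4 := Eij 3 2

/-- Odd basis elements of psl(2|2) (as matrix representatives). -/
def epp : M4 := Eij 0 3
def epm : M4 := -Eij 0 2
def emp : M4 := Eij 1 3
def emm : M4 := -Eij 1 2
def fpp : M4 := -Eij 2 1
def fpm : M4 := -Eij 3 1
def fmp : M4 := Eij 2 0
def fmm : M4 := Eij 3 0

/-- The span of the identity: passing to the quotient psl(2|2) means working
modulo this submodule. -/
def idSpan : Submodule ℂ M4 := Submodule.span ℂ {(1 : M4)}

/-- The supertrace in the defining representation of gl(2|2). -/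
def str (A : M4) : ℂ := A 0 0 + A 1 1 - A 2 2 - A 3 3

/-- Parity of an index: indices 0,1 are even, 2,3 are odd. -/
def par (i : Fin 4) : Bool := decide (2 ≤ (i : ℕ))

/-- The parity operator: negates the odd (off-diagonal block) part of a matrix. -/
def P : M4 →ₗ[ℂ] M4 where
  toFun A := Matrix.of fun i j => if par i = par j then A i j else -A i j
  map_add' A B := by
    ext i j
    by_cases h : par i = par j <;> simp [h] <;> ring
  map_smul' c A := by
    ext i j
    by_cases h : par i = par j <;> simp [h] <;> ring

/-- `A` is homogeneous of parity `a` (`false` = even, `true` = odd). -/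
def isHomog (a : Bool) (A : M4) : Prop := P A = if a then -A else A

/-- The super-adjoint action of a homogeneous element `A` of parity `a`:
`[A, X] = A·X - (-1)^{|A||X|} X·A`, implemented linearly using the parity
operator. -/
def sad (a : Bool) (A : M4) : M4 →ₗ[ℂ] M4 :=
  LinearMap.mulLeft ℂ A - (LinearMap.mulRight ℂ A).comp (if a then P else LinearMap.id)

end

/-!
On supertraceless matrices, ω is conjugation by `J = [[0, 1], [-1, 0]]` (in 2×2 blocks): both
maps are linear and agree on the basis of psl(2|2) together with the identity, which span
sl(2|2). Conjugation is multiplicative, and it negates the supertrace because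
`str X = tr (D X)` for the grading operator `D = diag(1, 1, -1, -1)`, which anticommutes with `J`:
`tr (D J X J⁻¹) = tr (J⁻¹ D J X) = -tr (D X)`.
-/

theorem Matrix.trace_mul_conj_eq_neg_of_anticommute {n R : Type*} [Fintype n] [DecidableEq n]
    [CommRing R] {D g g' : Matrix n n R} (hg : g' * g = 1) (hD : D * g = -(g * D))
    (X : Matrix n n R) : trace (D * (g * X * g')) = -trace (D * X) := by
  have hconj : g' * D * g = -D := by
    rw [Matrix.mul_assoc, hD, Matrix.mul_neg, ← Matrix.mul_assoc, hg, Matrix.one_mul]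
  rw [← Matrix.mul_assoc, trace_mul_comm, ← Matrix.mul_assoc, ← Matrix.mul_assoc, hconj,
    Matrix.neg_mul, trace_neg]

def superSign : M4 := diagonal ![1, 1, -1, -1]

def blockSwap : M4 := !![0, 0, 1, 0; 0, 0, 0, 1; -1, 0, 0, 0; 0, -1, 0, 0]

def conjBlockSwap : M4 →ₗ[ℂ] M4 := LinearMap.mulLeftRight ℂ (blockSwap, -blockSwap)

lemma str_eq_trace_superSign_mul (A : M4) : str A = trace (superSign * A) := by
  simp [str, superSign, trace, Fin.sum_univ_four, sub_eq_add_neg]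

lemma neg_blockSwap_mul_blockSwap : -blockSwap * blockSwap = 1 := by
  ext i j
  fin_cases i <;> fin_cases j <;> simp [blockSwap, mul_apply, Fin.sum_univ_four]

lemma superSign_mul_blockSwap : superSign * blockSwap = -(blockSwap * superSign) := by
  ext i j
  fin_cases i <;> fin_cases j <;>
    simp [blockSwap, superSign, vecMul, dotProduct, Fin.sum_univ_four]

lemma conjBlockSwap_apply (A : M4) : conjBlockSwap A =
    !![A 2 2, A 2 3, -A 2 0, -A 2 1; A 3 2, A 3 3, -A 3 0, -A 3 1;
      -A 0 2, -A 0 3, A 0 0, A 0 1; -A 1 2, -A 1 3, A 1 0, A 1 1] := by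
  ext i j
  fin_cases i <;> fin_cases j <;>
    simp [conjBlockSwap, blockSwap, mul_apply, vecMul, dotProduct, Fin.sum_univ_four]

lemma conjBlockSwap_mul (A B : M4) :
    conjBlockSwap A * conjBlockSwap B = conjBlockSwap (A * B) := by
  simp only [conjBlockSwap, LinearMap.mulLeftRight_apply, Matrix.mul_assoc]
  rw [← Matrix.mul_assoc (-blockSwap), neg_blockSwap_mul_blockSwap, Matrix.one_mul]

lemma str_conjBlockSwap (A : M4) : str (conjBlockSwap A) = -str A := by
  rw [str_eq_trace_superSign_mul, str_eq_trace_superSign_mul]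
  exact trace_mul_conj_eq_neg_of_anticommute neg_blockSwap_mul_blockSwap superSign_mul_blockSwap A

def slGens : Set M4 := {E1, H1, F1, E2, H2, F2, epp, epm, emp, emm, fpp, fpm, fmp, fmm, 1}

lemma mem_span_slGens_of_str_eq_zero {A : M4} (hA : str A = 0) :
    A ∈ Submodule.span ℂ slGens := by
  have hA' : A 0 0 + A 1 1 - A 2 2 - A 3 3 = 0 := hA
  have hdecomp : A = A 0 1 • E1 + ((A 0 0 - A 1 1) / 2) • H1 + A 1 0 • F1 + A 2 3 • E2
      + ((A 2 2 - A 3 3) / 2) • H2 + A 3 2 • F2 + A 0 3 • epp + (-A 0 2) • epm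
      + A 1 3 • emp + (-A 1 2) • emm + (-A 2 1) • fpp + (-A 3 1) • fpm
      + A 2 0 • fmp + A 3 0 • fmm + ((A 0 0 + A 1 1) / 2) • (1 : M4) := by
    ext i j
    fin_cases i <;> fin_cases j <;>
      simp [E1, H1, F1, E2, H2, F2, epp, epm, emp, emm, fpp, fpm, fmp, fmm, Eij, single] <;>
      first | ring1 | linear_combination hA' / 2 | linear_combination -hA' / 2
  rw [hdecomp]
  repeat' apply Submodule.add_mem
  all_goals exact Submodule.smul_mem _ _ (Submodule.subset_span (by simp [slGens]))

lemma eqOn_slGens_conjBlockSwap {ω : M4 →ₗ[ℂ] M4}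
    (h1 : ω E1 = E2) (h2 : ω E2 = E1) (h3 : ω H1 = H2) (h4 : ω H2 = H1)
    (h5 : ω F1 = F2) (h6 : ω F2 = F1)
    (h7 : ω epp = fpp) (h8 : ω fpp = epp) (h9 : ω epm = fmp) (h10 : ω fmp = epm)
    (h11 : ω emp = fpm) (h12 : ω fpm = emp) (h13 : ω emm = fmm) (h14 : ω fmm = emm)
    (h15 : ω (1 : M4) = 1) :
    Set.EqOn ω conjBlockSwap slGens := by
  rintro X (rfl | rfl | rfl | rfl | rfl | rfl | rfl | rfl | rfl | rfl | rfl | rfl | rfl | rfl |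
    rfl) <;>
    simp only [h1, h2, h3, h4, h5, h6, h7, h8, h9, h10, h11, h12, h13, h14, h15,
      conjBlockSwap_apply] <;>
    ext i j <;> fin_cases i <;> fin_cases j <;>
    simp [E1, H1, F1, E2, H2, F2, epp, epm, emp, emm, fpp, fpm, fmp, fmm, Eij, single]

theorem omega_negates_supertrace_form (ω : M4 →ₗ[ℂ] M4)
    (h1 : ω E1 = E2) (h2 : ω E2 = E1) (h3 : ω H1 = H2) (h4 : ω H2 = H1)
    (h5 : ω F1 = F2) (h6 : ω F2 = F1)
    (h7 : ω epp = fpp) (h8 : ω fpp = epp) (h9 : ω epm = fmp) (h10 : ω fmp = epm)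
    (h11 : ω emp = fpm) (h12 : ω fpm = emp) (h13 : ω emm = fmm) (h14 : ω fmm = emm)
    (h15 : ω (1 : M4) = 1) :
    ∀ A B : M4, str A = 0 → str B = 0 → str (ω A * ω B) = -str (A * B) := by
  have hω : ∀ X, str X = 0 → ω X = conjBlockSwap X := fun X hX =>
    LinearMap.eqOn_span' (eqOn_slGens_conjBlockSwap h1 h2 h3 h4 h5 h6 h7 h8 h9 h10 h11 h12 h13
      h14 h15) (mem_span_slGens_of_str_eq_zero hX)
  intro A B hA hB
  rw [hω A hA, hω B hB, conjBlockSwap_mul, str_conjBlockSwap]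
end

section
/- Let A be the Zhu algebra (with parameter k) above. A weight vector in an A-module is a simultaneous eigenvector of H and L; a highest-weight vector is a weight vector annihilated by both χ and ψ. Then every A-module containing a weight vector contains a highest-weight vector. -/
/-!
The Zhu algebra of the universal principal W-algebra of psl(2|2) at level k,
presented by generators and relations: it is the quotient of the free algebra
on even generators H, L, S and odd generators χ, χ', ψ, ψ' by the stated
relations ([·,·] = commutator, {·,·} = anticommutator).
-/

noncomputable section

abbrev FA := FreeAlgebra ℂ (Fin 7)

def χ : FA := FreeAlgebra.ι ℂ (0 : Fin 7)
def χ' : FA := FreeAlgebra.ι ℂ (1 : Fin 7)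
def ψ : FA := FreeAlgebra.ι ℂ (2 : Fin 7)
def ψ' : FA := FreeAlgebra.ι ℂ (3 : Fin 7)
def Hg : FA := FreeAlgebra.ι ℂ (4 : Fin 7)
def Lg : FA := FreeAlgebra.ι ℂ (5 : Fin 7)
def Sg : FA := FreeAlgebra.ι ℂ (6 : Fin 7)

inductive ZhuRel (k : ℂ) : FA → FA → Prop
  | r1 : ZhuRel k (χ * χ) 0
  | r2 : ZhuRel k (χ' * χ') 0
  | r3 : ZhuRel k (χ * Sg + Sg * χ) 0
  | r4 : ZhuRel k (χ' * Sg + Sg * χ') 0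
  | r5 : ZhuRel k (χ * Hg + Hg * χ) ψ
  | r6 : ZhuRel k (χ' * Hg + Hg * χ') ψ'
  | r7 : ZhuRel k (χ * χ' + χ' * χ) 0
  | r8 : ZhuRel k (χ * ψ + ψ * χ) 0
  | r9 : ZhuRel k (χ' * ψ' + ψ' * χ') 0
  | r10 : ZhuRel k (χ * ψ' + ψ' * χ) Sg
  | r11 : ZhuRel k (χ' * ψ + ψ * χ') (-Sg)
  | r12 : ZhuRel k (ψ * ψ) ((1/2 : ℂ) • (χ * ψ))
  | r13 : ZhuRel k (ψ' * ψ') ((1/2 : ℂ) • (χ' * ψ'))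
  | r14 : ZhuRel k (ψ * Sg - Sg * ψ) ((1/2 : ℂ) • (χ * Sg))
  | r15 : ZhuRel k (ψ' * Sg - Sg * ψ') ((1/2 : ℂ) • (χ' * Sg))
  | r16 : ZhuRel k (ψ * ψ' + ψ' * ψ) ((1/2 : ℂ) • (χ * ψ' + χ' * ψ))
  | r17 : ZhuRel k (Sg * Hg - Hg * Sg) ((1/2 : ℂ) • (χ * ψ' + ψ * χ'))
  | r18 : ZhuRel k (ψ * Hg - Hg * ψ)
      (χ * (Hg + (3 * k ^ 2 / 2 : ℂ) • Lg + ((1/4 : ℂ) * (k ^ 2 - 1/4)) • (1 : FA))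
        - (1/2 : ℂ) • ψ)
  | r19 : ZhuRel k (ψ' * Hg - Hg * ψ')
      (χ' * (Hg + (3 * k ^ 2 / 2 : ℂ) • Lg + ((1/4 : ℂ) * (k ^ 2 - 1/4)) • (1 : FA))
        - (1/2 : ℂ) • ψ')
  | r20 : ZhuRel k Lg (Sg + (1/2 : ℂ) • (χ' * χ))

/-- The Zhu algebra of the principal W-algebra of psl(2|2) at level k. -/
abbrev Zhu (k : ℂ) := RingQuot (ZhuRel k)

/-- The quotient map from the free algebra to the Zhu algebra. -/
def mz (k : ℂ) : FA →+* Zhu k := RingQuot.mkRingHom (ZhuRel k)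

end

/-!
STATEMENT 11: A weight vector in a module over the Zhu algebra is a (nonzero)
simultaneous eigenvector of H and L; a highest-weight vector is a weight vector
annihilated by χ and ψ. Every module containing a weight vector contains a
highest-weight vector.
-/

noncomputable section AuxKey

variable {R : Type} [Ring R] [Algebra ℂ R] {V : Type} [AddCommGroup V] [Module R V]

local notation "al" => algebraMap ℂ R

theorem hw_key (κ c₀ : ℂ) (X P P' Hh Ll : R)
    (e1 : X*X = 0) (ePX : P*X = -(X*P)) (e5 : Hh*X = P - X*Hh)
    (e12 : P*P = (1/2 : ℂ) • (X*P))
    (e18 : Hh*P = P*Hh - (X*Hh + κ • (X*Ll) + c₀ • X - (1/2 : ℂ) • P))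
    (iLX : Ll*X = -(X*Ll)) (iLP : Ll*P = P*Ll - X*Ll) (iLH : Ll*Hh = Hh*Ll - P'*X)
    (v : V) (h Δ : ℂ) (hv0 : v ≠ 0)
    (hvH : Hh • v = al h • v) (hvL : Ll • v = al Δ • v) :
    ∃ (w : V) (h' Δ' : ℂ), w ≠ 0 ∧ Hh • w = al h' • w ∧ Ll • w = al Δ' • w ∧
      X • w = 0 ∧ P • w = 0 := by
  simp only [Algebra.smul_def] at e12 e18
  have hcomm : ∀ (c : ℂ) (z : R) (u : V), z • (al c • u) = al c • (z • u) := by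
    intro c z u; rw [← mul_smul, ← mul_smul, Algebra.commutes]
  have hmul : ∀ (c d : ℂ) (u : V), al c • (al d • u) = al (c*d) • u := by
    intro c d u; rw [← mul_smul, ← map_mul]
  have haddc : ∀ (c d : ℂ) (u : V), al c • u + al d • u = al (c+d) • u := by
    intro c d u; rw [← add_smul, ← map_add]
  have hsubc : ∀ (c d : ℂ) (u : V), al c • u - al d • u = al (c-d) • u := by
    intro c d u; rw [← sub_smul, ← map_sub]
  have hnegc : ∀ (c : ℂ) (u : V), -(al c • u) = al (-c) • u := by
    intro c u; rw [← neg_smul, ← map_neg]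
  set a := X • v with ha_def
  set b := P • v with hb_def
  set cv := X • (P • v) with hc_def
  have hXa : X • a = 0 := by rw [ha_def, ← mul_smul, e1, zero_smul]
  have hXb : X • b = cv := rfl
  have hPa : P • a = -cv := by
    rw [ha_def, ← mul_smul, ePX, neg_smul, mul_smul]
  have hPb : P • b = al (1/2) • cv := by
    rw [hb_def, ← mul_smul, e12, mul_smul, mul_smul]
  have hHa : Hh • a = b - al h • a := by
    rw [ha_def, ← mul_smul, e5, sub_smul, mul_smul, hvH, hcomm]
  have hLa : Ll • a = al (-Δ) • a := by
    rw [ha_def, ← mul_smul, iLX, neg_smul, mul_smul, hvL, hcomm, hnegc]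
  have hLb : Ll • b = al Δ • b - al Δ • a := by
    rw [hb_def, ← mul_smul, iLP, sub_smul, mul_smul, mul_smul, hvL, hcomm, hcomm]
  have hHb : Hh • b = al (h + 1/2) • b - al (h + κ*Δ + c₀) • a := by
    have h1 : (al κ * (X * Ll)) • v = al (κ*Δ) • a := by
      rw [mul_smul, mul_smul, hvL, hcomm, hmul]
    have h2 : (al c₀ * X) • v = al c₀ • a := by rw [mul_smul]
    have h3 : (X * Hh) • v = al h • a := by rw [mul_smul, hvH, hcomm]
    have h4 : (P * Hh) • v = al h • b := by rw [mul_smul, hvH, hcomm]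
    have h5 : (al (1/2) * P) • v = al (1/2) • b := by rw [mul_smul]
    rw [hb_def, ← mul_smul, e18, sub_smul, sub_smul, add_smul, add_smul,
      h1, h2, h3, h4, h5, haddc, haddc]
    have hre : ∀ (x y z : V), x - (y - z) = (x + z) - y := by intro x y z; abel
    rw [hre, haddc]
  have hXc : X • cv = 0 := by rw [← hXb, ← mul_smul, e1, zero_smul]
  have hHc : Hh • cv = al (-h) • cv := by
    have h0 : Hh • cv = (Hh * X) • b := by rw [mul_smul, hXb]
    rw [h0, e5, sub_smul, hPb, mul_smul, hHb, smul_sub, hcomm, hcomm, hXb, hXa,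
      smul_zero, sub_zero, hsubc, show (1/2 - (h + 1/2) : ℂ) = -h by ring]
  have hLc : Ll • cv = al (-Δ) • cv := by
    have h0 : Ll • cv = (Ll * X) • b := by rw [mul_smul, hXb]
    rw [h0, iLX, neg_smul, mul_smul, hLb, smul_sub, hcomm, hcomm, hXb, hXa,
      smul_zero, sub_zero, hnegc]
  have hPc : P • cv = 0 := by
    have h0 : P • cv = (P * X) • b := by rw [mul_smul, hXb]
    rw [h0, ePX, neg_smul, mul_smul, hPb, hcomm, hXc, smul_zero, neg_zero]
  by_cases hc0 : cv = 0
  · by_cases ha0 : a = 0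
    · have hb0 : b = 0 := by
        have h0 := hHa; rw [ha0, smul_zero, smul_zero, sub_zero] at h0; exact h0.symm
      exact ⟨v, h, Δ, hv0, hvH, hvL, by rw [← ha_def, ha0], by rw [← hb_def, hb0]⟩
    · by_cases hdep : ∃ t : ℂ, b = al t • a
      · obtain ⟨t, ht⟩ := hdep
        refine ⟨a, t - h, -Δ, ha0, ?_, hLa, hXa, by rw [hPa, hc0, neg_zero]⟩
        rw [hHa, ht, hsubc]
      · have hΔ0 : Δ = 0 := by
          by_contra hΔ
          have L1 : Ll • (Hh • b) = al ((h+1/2)*Δ) • b - al ((h+1/2)*Δ - (h + κ*Δ + c₀)*Δ) • a := by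
            rw [hHb, smul_sub, hcomm, hcomm, hLb, hLa, smul_sub, hmul, hmul, hmul,
              sub_sub, haddc, show ((h+1/2)*Δ + (h + κ*Δ + c₀)*(-Δ) : ℂ)
                = (h+1/2)*Δ - (h + κ*Δ + c₀)*Δ by ring]
          have L2 : Hh • (Ll • b) = al (Δ*(h+1/2) - Δ) • b - al (Δ*(h + κ*Δ + c₀) - Δ*h) • a := by
            rw [hLb, smul_sub, hcomm, hcomm, hHb, hHa, smul_sub, hmul, hmul,
              smul_sub, hmul]
            have hre : ∀ (x y z t : V), x - y - (z - t) = (x - z) - (y - t) := by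
              intro x y z t; abel
            rw [hre, hsubc, hsubc]
          have hc2 : Ll • (Hh • b) = Hh • (Ll • b) := by
            rw [← mul_smul, iLH, sub_smul, mul_smul P' X b, hXb, hc0, smul_zero,
              sub_zero, mul_smul]
          rw [L1, L2] at hc2
          have E := sub_eq_sub_iff_sub_eq_sub.mp hc2
          rw [hsubc, hsubc, show ((h+1/2)*Δ - (Δ*(h+1/2) - Δ) : ℂ) = Δ by ring] at E
          have h6 : b = al (2*h - 2*(h + κ*Δ + c₀) + 1/2) • a := by
            have h7 : b = al (1/Δ) • (al Δ • b) := by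
              rw [hmul, one_div, inv_mul_cancel₀ hΔ, map_one, one_smul]
            rw [h7, E, hmul, show ((1/Δ) * ((h+1/2)*Δ - (h + κ*Δ + c₀)*Δ - (Δ*(h + κ*Δ + c₀) - Δ*h)) : ℂ)
              = 2*h - 2*(h + κ*Δ + c₀) + 1/2 by field_simp; ring]
          exact hdep ⟨_, h6⟩
        obtain ⟨e, he⟩ := IsAlgClosed.exists_pow_nat_eq (k := ℂ)
          (1/16 - ((h + κ*Δ + c₀) - h^2 - h/2)) (n := 2) (by norm_num)
        have hlam : (1/4 + e)^2 - (1/2)*(1/4 + e) + ((h + κ*Δ + c₀) - h^2 - h/2) = 0 := by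
          linear_combination he
        refine ⟨al ((1/4 + e) - h - 1/2) • a + b, 1/4 + e, 0, ?_, ?_, ?_, ?_, ?_⟩
        · intro hw
          refine hdep ⟨-((1/4 + e) - h - 1/2), ?_⟩
          have hb' : b = -(al ((1/4 + e) - h - 1/2) • a) := by
            rw [eq_neg_iff_add_eq_zero, add_comm]; exact hw
          rw [hb', hnegc]
        · rw [smul_add, hcomm, hHa, hHb, smul_sub, hmul, smul_add, hmul]
          have hre : ∀ (x y z t : V), (x - y) + (z - t) = (x + z) - (y + t) := by
            intro x y z t; abel
          rw [hre, haddc, haddc, show (((1/4 + e) - h - 1/2) + (h + 1/2) : ℂ) = 1/4 + e by ring]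
          conv_rhs => rw [add_comm]
          rw [sub_eq_add_neg, hnegc, show (-((((1/4 + e) - h - 1/2))*h + (h + κ*Δ + c₀)) : ℂ)
            = (1/4 + e)*((1/4 + e) - h - 1/2) by linear_combination -hlam]
        · rw [smul_add, hcomm, hLa, hLb, hΔ0]
          simp
        · rw [smul_add, hcomm, hXa, smul_zero, zero_add, hXb, hc0]
        · rw [smul_add, hcomm, hPa, hPb, hc0, neg_zero, smul_zero, smul_zero, add_zero]
  · exact ⟨cv, -h, -Δ, hc0, hHc, hLc, hXc, hPc⟩

end AuxKey

noncomputable section AuxAlg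

variable (k : ℂ)

lemma mz_alg (x : FA) : mz k x = RingQuot.mkAlgHom ℂ (ZhuRel k) x := by
  rw [mz, ← RingQuot.mkAlgHom_coe ℂ (ZhuRel k)]; rfl

lemma mz_smul (c : ℂ) (x : FA) : mz k (c • x) = c • mz k x := by
  rw [mz_alg, mz_alg, map_smul]

lemma zr {x y : FA} (hxy : ZhuRel k x y) : mz k x = mz k y :=
  RingQuot.mkRingHom_rel hxy

lemma f1 : mz k χ * mz k χ = 0 := by
  simpa only [map_mul, map_zero] using zr k ZhuRel.r1

lemma f3 : mz k χ * mz k Sg + mz k Sg * mz k χ = 0 := by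
  simpa only [map_mul, map_add, map_zero] using zr k ZhuRel.r3

lemma f5 : mz k χ * mz k Hg + mz k Hg * mz k χ = mz k ψ := by
  simpa only [map_mul, map_add] using zr k ZhuRel.r5

lemma f6 : mz k χ' * mz k Hg + mz k Hg * mz k χ' = mz k ψ' := by
  simpa only [map_mul, map_add] using zr k ZhuRel.r6

lemma f7 : mz k χ * mz k χ' + mz k χ' * mz k χ = 0 := by
  simpa only [map_mul, map_add, map_zero] using zr k ZhuRel.r7

lemma f8 : mz k χ * mz k ψ + mz k ψ * mz k χ = 0 := by
  simpa only [map_mul, map_add, map_zero] using zr k ZhuRel.r8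

lemma f10 : mz k χ * mz k ψ' + mz k ψ' * mz k χ = mz k Sg := by
  simpa only [map_mul, map_add] using zr k ZhuRel.r10

lemma f11 : mz k χ' * mz k ψ + mz k ψ * mz k χ' = -(mz k Sg) := by
  simpa only [map_mul, map_add, map_neg] using zr k ZhuRel.r11

lemma f12 : mz k ψ * mz k ψ = (1/2 : ℂ) • (mz k χ * mz k ψ) := by
  simpa only [map_mul, mz_smul] using zr k ZhuRel.r12

lemma f14 : mz k ψ * mz k Sg - mz k Sg * mz k ψ = (1/2 : ℂ) • (mz k χ * mz k Sg) := by
  simpa only [map_mul, map_sub, mz_smul] using zr k ZhuRel.r14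

lemma f17 : mz k Sg * mz k Hg - mz k Hg * mz k Sg
    = (1/2 : ℂ) • (mz k χ * mz k ψ' + mz k ψ * mz k χ') := by
  simpa only [map_mul, map_sub, map_add, mz_smul] using zr k ZhuRel.r17

lemma f18 : mz k ψ * mz k Hg - mz k Hg * mz k ψ
    = mz k χ * (mz k Hg + (3 * k ^ 2 / 2 : ℂ) • mz k Lg
        + ((1/4 : ℂ) * (k ^ 2 - 1/4)) • (1 : Zhu k)) - (1/2 : ℂ) • mz k ψ := by
  simpa only [map_mul, map_sub, map_add, mz_smul, map_one] using zr k ZhuRel.r18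

lemma f20 : mz k Lg = mz k Sg + (1/2 : ℂ) • (mz k χ' * mz k χ) := by
  simpa only [map_mul, map_add, mz_smul] using zr k ZhuRel.r20

lemma halve {A : Type} [Ring A] [Algebra ℂ A] {x y : A} (hxy : x + x = y + y) : x = y := by
  have h2 : (2:ℂ) • x = (2:ℂ) • y := by rw [two_smul, two_smul]; exact hxy
  calc x = (1/2 : ℂ) • ((2:ℂ) • x) := by rw [smul_smul]; norm_num
    _ = (1/2 : ℂ) • ((2:ℂ) • y) := by rw [h2]
    _ = y := by rw [smul_smul]; norm_num

lemma d14 : (mz k ψ * mz k Sg - mz k Sg * mz k ψ) + (mz k ψ * mz k Sg - mz k Sg * mz k ψ)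
    = mz k χ * mz k Sg := by
  rw [f14, ← add_smul]; norm_num

lemma d17 : (mz k Sg * mz k Hg - mz k Hg * mz k Sg) + (mz k Sg * mz k Hg - mz k Hg * mz k Sg)
    = mz k χ * mz k ψ' + mz k ψ * mz k χ' := by
  rw [f17, ← add_smul]; norm_num

lemma d20 : mz k Lg + mz k Lg = (mz k Sg + mz k Sg) + mz k χ' * mz k χ := by
  have hre : ∀ (x y : Zhu k), (x + y) + (x + y) = (x + x) + (y + y) := fun x y => by abel
  rw [f20, hre, ← add_smul]; norm_num

lemma f11n : mz k χ' * mz k ψ + mz k ψ * mz k χ' + mz k Sg = 0 := by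
  rw [f11]; abel

lemma iLX : mz k Lg * mz k χ = -(mz k χ * mz k Lg) := by
  apply halve
  linear_combination (norm := noncomm_ring)
    d20 k * mz k χ + mz k χ * d20 k + 2 * f3 k + f7 k * mz k χ

lemma iXLS : mz k χ * mz k Lg = mz k χ * mz k Sg := by
  apply halve
  linear_combination (norm := noncomm_ring)
    mz k χ * d20 k + f7 k * mz k χ - mz k χ' * f1 k

lemma iLP : mz k Lg * mz k ψ = mz k ψ * mz k Lg - mz k χ * mz k Lg := by
  apply halve
  linear_combination (norm := noncomm_ring)
    d20 k * mz k ψ - mz k ψ * d20 k + 2 * iXLS k - d14 k + mz k χ' * f8 k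
      - f11n k * mz k χ + f3 k

lemma iLH : mz k Lg * mz k Hg = mz k Hg * mz k Lg - mz k ψ' * mz k χ := by
  apply halve
  linear_combination (norm := noncomm_ring)
    d20 k * mz k Hg - mz k Hg * d20 k + d17 k + mz k χ' * f5 k - f6 k * mz k χ
      + f10 k + f11n k

lemma ePX : mz k ψ * mz k χ = -(mz k χ * mz k ψ) := by
  linear_combination (norm := noncomm_ring) f8 k

lemma e5 : mz k Hg * mz k χ = mz k ψ - mz k χ * mz k Hg := by
  linear_combination (norm := noncomm_ring) f5 k

lemma e18 : mz k Hg * mz k ψ = mz k ψ * mz k Hg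
    - (mz k χ * mz k Hg + (3 * k ^ 2 / 2 : ℂ) • (mz k χ * mz k Lg)
      + ((1/4 : ℂ) * (k ^ 2 - 1/4)) • mz k χ - (1/2 : ℂ) • mz k ψ) := by
  linear_combination (norm := noncomm_ring) -(f18 k)

end AuxAlg

theorem weight_vector_gives_hw_vector (k : ℂ) (V : Type) [AddCommGroup V]
    [Module (Zhu k) V]
    (hwt : ∃ (v : V) (h Δ : ℂ), v ≠ 0 ∧
      mz k Hg • v = algebraMap ℂ (Zhu k) h • v ∧
      mz k Lg • v = algebraMap ℂ (Zhu k) Δ • v) :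
    ∃ (w : V) (h Δ : ℂ), w ≠ 0 ∧
      mz k Hg • w = algebraMap ℂ (Zhu k) h • w ∧
      mz k Lg • w = algebraMap ℂ (Zhu k) Δ • w ∧
      mz k χ • w = 0 ∧ mz k ψ • w = 0 := by
  
  obtain ⟨v, h, Δ, hv0, hvH, hvL⟩ := hwt
  obtain ⟨w, h', Δ', hw0, hH, hL, hX, hP⟩ :=
    hw_key (3 * k ^ 2 / 2) ((1/4 : ℂ) * (k ^ 2 - 1/4)) (mz k χ) (mz k ψ) (mz k ψ')
      (mz k Hg) (mz k Lg) (f1 k) (ePX k) (e5 k) (f12 k) (e18 k) (iLX k) (iLP k)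
      (iLH k) v h Δ hv0 hvH hvL
  exact ⟨w, h', Δ', hw0, hH, hL, hX, hP⟩
end
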